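/- Let A be an admissible linear chain, let B be the admissible chain with e(B) = 1 − e(Aᵀ) (i.e. B = A*), and let m, n be positive integers such that A ∗ TWₘ = TWₙ ∗ A. Then m = n and A = TWₙ^{∗ r(B)}, the r(B)-fold ∗-product of TWₙ with itself. -/

import Mathlib

/-- The tridiagonal matrix associated to a linear chain `A = [a₁,…,a_r]`:
diagonal entries `aᵢ`, entries `-1` immediately above/below the diagonal, `0` elsewhere. -/
def chainMatrix (A : List ℤ) : Matrix (Fin A.length) (Fin A.length) ℤ :=
  fun i j =>
    if i = j then A.get i
    else if (i : ℕ) + 1 = (j : ℕ) ∨ (j : ℕ) + 1 = (i : ℕ) then -1 else 0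

/-- The discriminant `d(A)` of a linear chain: the determinant of `chainMatrix A`
(the `0 × 0` determinant being `1` for the empty list). -/
def disc (A : List ℤ) : ℤ := (chainMatrix A).det

/-- A linear chain is admissible if it is nonempty and all of its entries are `≥ 2`. -/
def Admissible (A : List ℤ) : Prop := A ≠ [] ∧ ∀ a ∈ A, 2 ≤ a

/-- The inductance `e(A) = d(A̅)/d(A)` of a linear chain, as a rational number. -/
def inductance (A : List ℤ) : ℚ := (disc A.tail : ℚ) / (disc A : ℚ)

/-- `TW n`: the list consisting of `n` copies of the integer `2`. -/
def TW (n : ℕ) : List ℤ := List.replicate n 2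

/-- The `∗`-product of two (nonempty) integer lists:
`[a₁,…,a_r] ∗ [b₁,…,b_s] = [a₁,…,a_{r−1}, a_r + b₁ − 1, b₂,…,b_s]`. -/
def sprod (A B : List ℤ) : List ℤ :=
  A.dropLast ++ (A.getLast! + B.head! - 1) :: B.tail

/-- `sprodPow L n` is the `n`-fold `∗`-product `L ∗ ⋯ ∗ L` for `n ≥ 1`
(with the convention `sprodPow L 0 = L`). -/
def sprodPow (L : List ℤ) : ℕ → List ℤ
  | 0 => L
  | n + 1 => if n = 0 then L else sprod (sprodPow L n) L

/-!
Write `T = TWₙ₋₁`. For `A = L ++ [z] = a :: R` the relation `A ∗ TWₙ = TWₙ ∗ A` reads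
`(L ++ [z + 1]) ++ T = T ++ (a + 1) :: R`. Comparing the two factorisations of this word
shows that either `A = TWₙ`, or `A = Z ∗ TWₙ = TWₙ ∗ Z` for a shorter admissible `Z` (for
`n = 1`, `A` is a single entry); hence `A = TWₙ^{∗k}`. The discriminants of `TWₙ^{∗k}` and of
its truncation follow the recursion of `d([n+1, …, n+1])`, which identifies `1 - e(Aᵀ)` with
the inductance of the chain of `k` entries `n + 1`. Admissible chains are determined by their
inductance (the Hirzebruch–Jung continued fraction `1 / e(a :: l) = a - e(l)`), so `A*` is
that chain, of length `k`.
-/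

lemma disc_nil : disc [] = 1 := Matrix.det_fin_zero

lemma disc_singleton (a : ℤ) : disc [a] = a := by
  simp [disc, chainMatrix]

lemma disc_cons_cons (a b : ℤ) (t : List ℤ) :
    disc (a :: b :: t) = a * disc (b :: t) - disc t := by
  let M : Matrix (Fin (t.length + 2)) (Fin (t.length + 2)) ℤ := chainMatrix (a :: b :: t)
  have hM : M.submatrix Fin.succ Fin.succ = chainMatrix (b :: t) := by
    ext i j; simp [M, chainMatrix, Fin.succ_inj]
  have hN : (M.submatrix Fin.succ (Fin.succAbove 1)).det = -disc t := by
    have hNN : (M.submatrix Fin.succ (Fin.succAbove 1)).submatrix (Fin.succAbove 0) Fin.succ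
        = chainMatrix t := by
      ext i j; simp [M, chainMatrix, Fin.succAbove]
    rw [Matrix.det_succ_column_zero, Fin.sum_univ_succ, Finset.sum_eq_zero, hNN]
    · simp [M, chainMatrix, disc]
    · intro i _
      simp [M, chainMatrix]
  -- Laplace expansion along the first row, whose only nonzero entries are `a` and `-1`; the
  -- minor of the `-1` has first column `(-1, 0, …, 0)` and is expanded along it.
  change M.det = _
  rw [Matrix.det_succ_row_zero, Fin.sum_univ_succ, Fin.sum_univ_succ, Finset.sum_eq_zero]
  · simp [hM, hN, M, chainMatrix, disc, sub_eq_add_neg]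
  · intro j _
    simp [M, chainMatrix, (Fin.succ_ne_zero _).symm]

lemma disc_cons_add (x c : ℤ) (l : List ℤ) :
    disc ((x + c) :: l) = disc (x :: l) + c * disc l := by
  cases l with
  | nil => simp [disc_singleton, disc_nil]
  | cons b t => rw [disc_cons_cons, disc_cons_cons]; ring

lemma disc_reverse (l : List ℤ) : disc l.reverse = disc l := by
  let e : Fin l.reverse.length ≃ Fin l.length := (finCongr List.length_reverse).trans Fin.revPerm
  have : chainMatrix l.reverse = (chainMatrix l).submatrix e e := by
    ext i j
    have hi := i.isLt
    have hj := j.isLt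
    simp only [List.length_reverse] at hi hj
    simp only [e, chainMatrix, Fin.ext_iff, List.get_eq_getElem, List.getElem_reverse,
      Matrix.submatrix_apply, Equiv.trans_apply, finCongr_apply, Fin.revPerm_apply,
      Fin.val_rev, Fin.val_cast]
    split_ifs <;> grind
  rw [disc, this, Matrix.det_submatrix_equiv_self]
  rfl

lemma disc_concat {l : List ℤ} (hl : l ≠ []) (a : ℤ) :
    disc (l ++ [a]) = a * disc l - disc l.dropLast := by
  obtain ⟨b, t, hbt⟩ := List.exists_cons_of_ne_nil (List.reverse_ne_nil_iff.mpr hl)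
  have ht : t = l.dropLast.reverse := by
    rw [← List.tail_reverse, hbt, List.tail_cons]
  rw [← disc_reverse, List.reverse_append, ← disc_reverse l, ← disc_reverse l.dropLast, hbt,
    ← ht]
  exact disc_cons_cons a b t

lemma disc_concat_add (L : List ℤ) (z c : ℤ) :
    disc (L ++ [z + c]) = disc (L ++ [z]) + c * disc L := by
  rw [← disc_reverse, ← disc_reverse (L ++ [z]), ← disc_reverse L]
  simpa using disc_cons_add z c L.reverse

lemma disc_replicate_succ_succ (c : ℤ) (j : ℕ) :
    disc (List.replicate (j + 2) c) =
      c * disc (List.replicate (j + 1) c) - disc (List.replicate j c) :=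
  disc_cons_cons c c _

lemma disc_replicate_two : ∀ j : ℕ, disc (List.replicate j 2) = j + 1
  | 0 => disc_nil
  | 1 => disc_singleton 2
  | j + 2 => by
    rw [disc_replicate_succ_succ, disc_replicate_two (j + 1), disc_replicate_two j]
    push_cast; ring

lemma Admissible.of_cons {a : ℤ} {l : List ℤ} (h : Admissible (a :: l)) (hl : l ≠ []) :
    Admissible l :=
  ⟨hl, fun x hx => h.2 x (List.mem_cons_of_mem a hx)⟩

lemma admissible_replicate {k : ℕ} {c : ℤ} (hk : k ≠ 0) (hc : 2 ≤ c) :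
    Admissible (List.replicate k c) :=
  ⟨by simpa using hk, fun _ hx => (List.eq_of_mem_replicate hx).symm ▸ hc⟩

lemma Admissible.disc_tail_pos_lt : ∀ {A : List ℤ}, Admissible A →
    0 < disc A.tail ∧ disc A.tail < disc A
  | [], hA => absurd rfl hA.1
  | [a], hA => by
    have := hA.2 a (by simp)
    simp only [List.tail_cons, disc_nil, disc_singleton]
    omega
  | a :: b :: t, hA => by
    have ha := hA.2 a (by simp)
    obtain ⟨ht, htb⟩ := (hA.of_cons (List.cons_ne_nil b t)).disc_tail_pos_lt
    simp only [List.tail_cons] at ht htb ⊢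
    rw [disc_cons_cons]
    constructor <;> nlinarith

lemma Admissible.disc_pos {A : List ℤ} (hA : Admissible A) : 0 < disc A :=
  hA.disc_tail_pos_lt.1.trans hA.disc_tail_pos_lt.2

lemma Admissible.inductance_pos_lt_one {A : List ℤ} (hA : Admissible A) :
    0 < inductance A ∧ inductance A < 1 := by
  obtain ⟨h0, h1⟩ := hA.disc_tail_pos_lt
  have hd : (0 : ℚ) < disc A := by exact_mod_cast h0.trans h1
  rw [inductance, div_pos_iff_of_pos_right hd, div_lt_one hd]
  exact ⟨by exact_mod_cast h0, by exact_mod_cast h1⟩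

lemma inductance_singleton (a : ℤ) : inductance [a] = (a : ℚ)⁻¹ := by
  simp [inductance, disc_nil, disc_singleton]

lemma inv_inductance_cons_cons (a b : ℤ) (t : List ℤ) (h : disc (b :: t) ≠ 0) :
    (inductance (a :: b :: t))⁻¹ = a - inductance (b :: t) := by
  have h' : (disc (b :: t) : ℚ) ≠ 0 := by exact_mod_cast h
  simp only [inductance, List.tail_cons, inv_div, disc_cons_cons]
  push_cast
  field_simp

lemma Int.eq_of_sub_eq_sub_of_mem_Ico {R : Type*} [CommRing R] [LinearOrder R]
    [IsStrictOrderedRing R] {a b : ℤ} {x y : R} (hx : x ∈ Set.Ico 0 1) (hy : y ∈ Set.Ico 0 1)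
    (h : a - x = b - y) : a = b := by
  obtain ⟨hx0, hx1⟩ := hx
  obtain ⟨hy0, hy1⟩ := hy
  have hab : (a : R) < b + 1 := by linarith
  have hba : (b : R) < a + 1 := by linarith
  norm_cast at hab hba
  omega

lemma Admissible.inductance_ne_singleton {b c : ℤ} {t : List ℤ} (hB : Admissible (b :: c :: t))
    (a : ℤ) : inductance (b :: c :: t) ≠ inductance [a] := by
  intro h
  have hBt := hB.of_cons (List.cons_ne_nil c t)
  have he := hBt.inductance_pos_lt_one
  rw [← inv_inj, inductance_singleton, inv_inv,
    inv_inductance_cons_cons _ _ _ hBt.disc_pos.ne'] at h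
  have hab := Int.eq_of_sub_eq_sub_of_mem_Ico (y := 0) ⟨he.1.le, he.2⟩ ⟨le_rfl, one_pos⟩
    (by simpa using h)
  subst hab
  linarith

theorem Admissible.eq_of_inductance_eq : ∀ {A B : List ℤ}, Admissible A → Admissible B →
    inductance A = inductance B → A = B
  | [], _, hA, _, _ => absurd rfl hA.1
  | _, [], _, hB, _ => absurd rfl hB.1
  | [a], [b], _, _, h => by
    rw [inductance_singleton, inductance_singleton, inv_inj] at h
    rw [Int.cast_inj.mp h]
  | [a], b :: c :: t, _, hB, h => absurd h.symm (hB.inductance_ne_singleton a)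
  | a :: c :: s, [b], hA, _, h => absurd h (hA.inductance_ne_singleton b)
  | a :: c :: s, b :: d :: t, hA, hB, h => by
    have hAs := hA.of_cons (List.cons_ne_nil c s)
    have hBt := hB.of_cons (List.cons_ne_nil d t)
    have heA := hAs.inductance_pos_lt_one
    have heB := hBt.inductance_pos_lt_one
    rw [← inv_inj, inv_inductance_cons_cons _ _ _ hAs.disc_pos.ne',
      inv_inductance_cons_cons _ _ _ hBt.disc_pos.ne'] at h
    have hab := Int.eq_of_sub_eq_sub_of_mem_Ico ⟨heA.1.le, heA.2⟩ ⟨heB.1.le, heB.2⟩ h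
    subst hab
    rw [hAs.eq_of_inductance_eq hBt (by linarith)]

lemma inductance_reverse (l : List ℤ) :
    inductance l.reverse = (disc l.dropLast : ℚ) / disc l := by
  rw [inductance, List.tail_reverse, disc_reverse, disc_reverse]

lemma inductance_replicate_succ (k : ℕ) (c : ℤ) :
    inductance (List.replicate (k + 1) c) =
      (disc (List.replicate k c) : ℚ) / disc (List.replicate (k + 1) c) := by
  rw [inductance, List.tail_replicate, Nat.add_sub_cancel]

lemma sprod_concat_cons (L : List ℤ) (z b : ℤ) (R : List ℤ) :
    sprod (L ++ [z]) (b :: R) = L ++ (z + b - 1) :: R := by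
  simp [sprod]

lemma length_sprod {A B : List ℤ} (hA : A ≠ []) (hB : B ≠ []) :
    (sprod A B).length + 1 = A.length + B.length := by
  have := List.length_pos_iff.mpr hA
  have := List.length_pos_iff.mpr hB
  simp only [sprod, List.length_append, List.length_dropLast, List.length_cons, List.length_tail]
  omega

lemma TW_succ (n : ℕ) : TW (n + 1) = 2 :: TW n := rfl

lemma TW_succ' (n : ℕ) : TW (n + 1) = TW n ++ [2] := List.replicate_succ'

lemma length_TW (n : ℕ) : (TW n).length = n := List.length_replicate

lemma TW_ne_nil {n : ℕ} (hn : n ≠ 0) : TW n ≠ [] := by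
  simpa [TW] using hn

lemma sprod_TW_succ (L : List ℤ) (z : ℤ) (n : ℕ) :
    sprod (L ++ [z]) (TW (n + 1)) = L ++ (z + 1) :: TW n := by
  rw [TW_succ, sprod_concat_cons, add_sub_assoc, show (2 : ℤ) - 1 = 1 by norm_num]

lemma TW_sprod (a : ℤ) (R : List ℤ) (n : ℕ) :
    sprod (TW (n + 1)) (a :: R) = TW n ++ (a + 1) :: R := by
  rw [TW_succ', sprod_concat_cons, add_sub_right_comm, show (2 : ℤ) - 1 = 1 by norm_num, add_comm]

lemma sprod_TW_succ_succ (A : List ℤ) (n : ℕ) :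
    sprod A (TW (n + 2)) = sprod A (TW (n + 1)) ++ [2] := by
  simp only [sprod, TW_succ, List.head!_cons, List.tail_cons]
  rw [← TW_succ, TW_succ']
  simp

lemma disc_sprod_TW {A : List ℤ} (hA : A ≠ []) : ∀ n : ℕ,
    disc (sprod A (TW (n + 1))) = (n + 1) * disc A + disc A.dropLast ∧
      disc (sprod A (TW (n + 1))).dropLast = n * disc A + disc A.dropLast
  | 0 => by
    obtain ⟨L, z, rfl⟩ := (List.eq_nil_or_concat' A).resolve_left hA
    rw [sprod_TW_succ, TW, List.replicate_zero, List.dropLast_concat, disc_concat_add]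
    simp
  | n + 1 => by
    obtain ⟨h₁, h₂⟩ := disc_sprod_TW hA n
    rw [sprod_TW_succ_succ, List.dropLast_concat, disc_concat (by simp [sprod]), h₁, h₂]
    push_cast
    constructor <;> ring

lemma sprodPow_one (L : List ℤ) : sprodPow L 1 = L := rfl

lemma sprodPow_succ_succ (L : List ℤ) (k : ℕ) :
    sprodPow L (k + 2) = sprod (sprodPow L (k + 1)) L := rfl

lemma sprodPow_succ_ne_nil {L : List ℤ} (hL : L ≠ []) : ∀ k : ℕ, sprodPow L (k + 1) ≠ []
  | 0 => hL
  | k + 1 => by simp [sprodPow_succ_succ, sprod]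

lemma sprodPow_TW_one : ∀ k : ℕ, sprodPow (TW 1) (k + 1) = [(k : ℤ) + 2]
  | 0 => rfl
  | k + 1 => by
    rw [sprodPow_succ_succ, sprodPow_TW_one k]
    simp [sprod, TW]
    ring

lemma disc_sprodPow_TW (n : ℕ) : ∀ k : ℕ,
    disc (sprodPow (TW (n + 1)) (k + 1)) = disc (List.replicate (k + 1) ((n : ℤ) + 2)) ∧
      disc (sprodPow (TW (n + 1)) (k + 1)).dropLast =
        disc (List.replicate (k + 1) ((n : ℤ) + 2)) - disc (List.replicate k ((n : ℤ) + 2))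
  | 0 => by
    rw [sprodPow_one, TW_succ', List.dropLast_concat, ← TW_succ']
    simp only [TW, disc_replicate_two, zero_add, List.replicate_one, disc_singleton,
      List.replicate_zero, disc_nil]
    push_cast
    constructor <;> ring
  | k + 1 => by
    obtain ⟨h₁, h₂⟩ := disc_sprodPow_TW n k
    obtain ⟨h₃, h₄⟩ := disc_sprod_TW (sprodPow_succ_ne_nil (TW_ne_nil n.succ_ne_zero) k) n
    rw [sprodPow_succ_succ, h₃, h₄, h₁, h₂, disc_replicate_succ_succ]
    constructor <;> ring

theorem eq_replicate_of_inductance_eq_one_sub (n k : ℕ) {B : List ℤ} (hB : Admissible B)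
    (h : inductance B = 1 - inductance (sprodPow (TW (n + 1)) (k + 1)).reverse) :
    B = List.replicate (k + 1) ((n : ℤ) + 2) := by
  have hR : Admissible (List.replicate (k + 1) ((n : ℤ) + 2)) :=
    admissible_replicate k.succ_ne_zero (by omega)
  refine hB.eq_of_inductance_eq hR ?_
  obtain ⟨h₁, h₂⟩ := disc_sprodPow_TW n k
  have hpos : (disc (List.replicate (k + 1) ((n : ℤ) + 2)) : ℚ) ≠ 0 := by
    exact_mod_cast hR.disc_pos.ne'
  rw [h, inductance_reverse, h₁, h₂, inductance_replicate_succ]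
  push_cast
  field_simp
  ring

lemma eq_singleton_of_sprod_TW_one_comm {A : List ℤ} (hA : A ≠ [])
    (h : sprod A (TW 1) = sprod (TW 1) A) : ∃ a, A = [a] := by
  obtain ⟨L, z, rfl⟩ := (List.eq_nil_or_concat' A).resolve_left hA
  cases L with
  | nil => exact ⟨z, rfl⟩
  | cons b L =>
    rw [show TW 1 = TW (0 + 1) from rfl, sprod_TW_succ, List.cons_append (bs := [z]),
      TW_sprod] at h
    simp [TW] at h

lemma append_TW_eq_TW_cons_cases (p : ℕ) {L R : List ℤ} {a z : ℤ} (hz : 2 ≤ z)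
    (h : (L ++ [z + 1]) ++ TW (p + 1) = TW (p + 1) ++ (a + 1) :: R) :
    (L = TW (p + 1) ∧ R = TW (p + 1)) ∨
      ∃ C, L = TW (p + 1) ++ (a + 1) :: C ∧ R = C ++ (z + 1) :: TW (p + 1) := by
  set T := TW (p + 1)
  have hT : ∀ x ∈ T, x = 2 := fun x hx => List.eq_of_mem_replicate hx
  rcases List.append_eq_append_iff.mp h with ⟨C, hTC, -⟩ | ⟨C, hLC, hCT⟩
  · have := hT (z + 1) (by simp [hTC])
    omega
  match C with
  | [] =>
    rw [List.append_nil] at hLC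
    have := hT (z + 1) (by simp [← hLC])
    omega
  | [c] =>
    obtain ⟨hL, -⟩ := List.append_singleton_inj.mp hLC
    exact Or.inl ⟨hL, (by simpa using hCT : a + 1 = c ∧ R = T).2⟩
  | c :: d :: C' =>
    obtain ⟨C, e, hC⟩ :=
      (List.eq_nil_or_concat' (d :: C')).resolve_left (List.cons_ne_nil _ _)
    rw [hC] at hLC hCT
    obtain ⟨hL, rfl⟩ := List.append_singleton_inj.mp
      (hLC.trans (show T ++ c :: (C ++ [e]) = (T ++ c :: C) ++ [e] by simp))
    obtain ⟨rfl, hR⟩ : a + 1 = c ∧ R = C ++ (z + 1) :: T := by simpa using hCT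
    exact Or.inr ⟨C, hL, hR⟩

lemma sprod_TW_comm_descent (p : ℕ) {A : List ℤ} (hA : Admissible A)
    (h : sprod A (TW (p + 2)) = sprod (TW (p + 2)) A) :
    A = TW (p + 2) ∨ ∃ Z, Admissible Z ∧ Z.length < A.length ∧
      sprod Z (TW (p + 2)) = A ∧ sprod (TW (p + 2)) Z = A := by
  obtain ⟨L, z, hLz⟩ := (List.eq_nil_or_concat' A).resolve_left hA.1
  obtain ⟨a, R, haR⟩ := List.exists_cons_of_ne_nil hA.1
  have hz : 2 ≤ z := hA.2 z (by simp [hLz])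
  have ha : 2 ≤ a := hA.2 a (by simp [haR])
  have h' : (L ++ [z + 1]) ++ TW (p + 1) = TW (p + 1) ++ (a + 1) :: R := by
    rw [List.append_assoc, List.singleton_append, ← sprod_TW_succ, ← TW_sprod, ← hLz, ← haR,
      h]
  rcases append_TW_eq_TW_cons_cases p hz h' with ⟨rfl, hR⟩ | ⟨C, hL, hR⟩
  · have ha2 : a = 2 := by
      have hA' := haR.symm.trans hLz
      simp only [TW_succ, List.cons_append, List.cons.injEq] at hA'
      exact hA'.1
    left
    rw [haR, ha2, hR]
    rfl
  -- `A = a :: C ++ (z + 1) :: TWₚ₊₁`; `Z` drops the suffix `TWₚ₊₁` and lowers `z + 1`.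
  right
  refine ⟨a :: (C ++ [z]), ⟨by simp, ?_⟩, ?_, ?_, ?_⟩
  · intro x hx
    simp only [List.mem_cons, List.mem_append, List.not_mem_nil, or_false] at hx
    rcases hx with rfl | hx | rfl
    · exact ha
    · exact hA.2 x (by simp [hLz, hL, hx])
    · exact hz
  · simp [haR, hR, length_TW]
  · rw [← List.cons_append, sprod_TW_succ, haR, hR, List.cons_append]
  · rw [TW_sprod, hLz, hL]
    simp

theorem exists_eq_sprodPow_of_sprod_TW_comm (n : ℕ) {A : List ℤ} (hA : Admissible A)
    (h : sprod A (TW (n + 1)) = sprod (TW (n + 1)) A) :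
    ∃ k, A = sprodPow (TW (n + 1)) (k + 1) := by
  rcases n with _ | p
  · obtain ⟨a, rfl⟩ := eq_singleton_of_sprod_TW_one_comm hA.1 h
    have ha := hA.2 a (by simp)
    refine ⟨(a - 2).toNat, ?_⟩
    rw [sprodPow_TW_one, Int.toNat_of_nonneg (by omega), sub_add_cancel]
  · induction hlen : A.length using Nat.strong_induction_on generalizing A with
    | _ r ih =>
      rcases sprod_TW_comm_descent p hA h with rfl | ⟨Z, hZ, hZA, hZW, hWZ⟩
      · exact ⟨0, rfl⟩
      · obtain ⟨k, rfl⟩ := ih _ (hlen ▸ hZA) hZ (hZW.trans hWZ.symm) rfl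
        exact ⟨k + 1, hZW.symm⟩

/-- Lemma 2.3 (iii), second half: if `A` is an admissible linear chain, `B = A*`,
and `m`, `n` are positive integers with `A ∗ TWₘ = TWₙ ∗ A`, then `m = n` and
`A = TWₙ^{∗ r(A*)}`, the `r(A*)`-fold `∗`-product of `TWₙ` with itself. -/
theorem eq_sprodPow_of_sprod_TW_comm (A B : List ℤ)
    (hA : Admissible A) (hB : Admissible B)
    (hAB : inductance B = 1 - inductance A.reverse)
    (m n : ℕ) (hm : 0 < m) (hn : 0 < n)
    (h : sprod A (TW m) = sprod (TW n) A) :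
    m = n ∧ A = sprodPow (TW n) B.length := by
  have hmn : m = n := by
    have hlen := congrArg List.length h
    have h₁ := length_sprod hA.1 (TW_ne_nil hm.ne')
    have h₂ := length_sprod (TW_ne_nil hn.ne') hA.1
    simp only [length_TW] at h₁ h₂
    omega
  subst hmn
  obtain ⟨n, rfl⟩ := Nat.exists_eq_succ_of_ne_zero hn.ne'
  obtain ⟨k, rfl⟩ := exists_eq_sprodPow_of_sprod_TW_comm n hA h
  rw [eq_replicate_of_inductance_eq_one_sub n k hB hAB, List.length_replicate]
  exact ⟨rfl, rfl⟩
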